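/- Let r ≥ 1 and consider the ℝ[x,y]-module homomorphism φ : ℝ[x,y]^3 → ℝ[x,y] sending the standard basis vectors to x^{r+1}, (x+y)^{r+1}, and y^{r+1} respectively. Then the kernel of φ is a free ℝ[x,y]-module of rank 2. -/

import Mathlib

open MvPolynomial

/-- The `ℝ[x,y]`-module homomorphism `ℝ[x,y]³ → ℝ[x,y]` sending the standard basis
vectors to `x^(r+1)`, `(x+y)^(r+1)` and `y^(r+1)` respectively. -/
noncomputable def phi (r : ℕ) :
    (Fin 3 → MvPolynomial (Fin 2) ℝ) →ₗ[MvPolynomial (Fin 2) ℝ]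
      MvPolynomial (Fin 2) ℝ where
  toFun f := f 0 * X 0 ^ (r + 1) + f 1 * (X 0 + X 1) ^ (r + 1) + f 2 * X 1 ^ (r + 1)
  map_add' f g := by
    simp only [Pi.add_apply]
    ring
  map_smul' c f := by
    simp only [Pi.smul_apply, smul_eq_mul, RingHom.id_apply]
    ring

/-!
For three generators `f`, a Hilbert–Burch argument identifies the syzygy module: if two syzygies
`t₁, t₂` satisfy `t₁ ⨯₃ t₂ = u • f` with `u` a unit, they form a basis. Indeed, for a syzygy `t`
the vectors `t ⨯₃ t₂` and `t₁ ⨯₃ t` are parallel to `f`, hence equal `a • f` and `b • f` since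
`f 0` and `f 2` are coprime; then `u • t - a • t₁ - b • t₂` is parallel to both `t₁` and `t₂`,
so it vanishes.

For `f = (x ^ n, (x + y) ^ n, y ^ n)` the two syzygies come from Padé approximants of
`(1 + t) ^ n`: a polynomial `B` of degree `≤ q` with `B(t) (1 + t) ^ n = C(t) + t ^ n A(t)` and
`deg C ≤ p`, where `p + q + 1 = n`, homogenized. Taking degrees `⌊n/2⌋` and `⌈n/2⌉`, and
transporting the first one by the substitution `(x, y) ↦ (-x, x + y)`, the cross product is a
multiple of `f` by a polynomial of degree `0`, which is nonzero at `(1, 0)`.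
-/

open Finset Matrix

section CrossProduct

variable {R : Type*} [CommRing R] {f t t₁ t₂ v w : Fin 3 → R}

theorem smul_eq_smul_of_cross_eq_zero (h : v ⨯₃ w = 0) (i : Fin 3) : v i • w = w i • v := by
  have h0 := congrFun h 0
  have h1 := congrFun h 1
  have h2 := congrFun h 2
  simp only [cross_apply, Fin.isValue, Matrix.cons_val, Pi.zero_apply] at h0 h1 h2
  ext j
  simp only [Pi.smul_apply, smul_eq_mul]
  fin_cases i <;> fin_cases j <;> simp only [Fin.reduceFinMk, Fin.isValue] <;> grind

theorem cross_cross_eq_zero_of_dotProduct_eq_zero (h₁ : t₁ ⬝ᵥ f = 0) (h₂ : t₂ ⬝ᵥ f = 0) :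
    t₁ ⨯₃ t₂ ⨯₃ f = 0 := by
  rw [cross_cross_eq_smul_sub_smul, h₁, h₂, zero_smul, zero_smul, sub_zero]

variable [IsDomain R]

theorem eq_zero_of_cross_eq_zero_of_cross_eq_zero (h₁ : v ⨯₃ t₁ = 0) (h₂ : v ⨯₃ t₂ = 0)
    (h : t₁ ⨯₃ t₂ ≠ 0) : v = 0 := by
  ext i
  have : (v i * v i) • (t₁ ⨯₃ t₂) = 0 := by
    rw [mul_smul, ← LinearMap.map_smul₂, ← LinearMap.map_smul, smul_eq_smul_of_cross_eq_zero h₁,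
      smul_eq_smul_of_cross_eq_zero h₂, LinearMap.map_smul₂, LinearMap.map_smul, cross_self,
      smul_zero, smul_zero]
  simpa using (smul_eq_zero.mp this).resolve_right h

theorem exists_eq_smul_of_cross_eq_zero [DecompositionMonoid R] (hf : f 0 ≠ 0)
    (hcop : IsRelPrime (f 0) (f 2)) (h : w ⨯₃ f = 0) : ∃ a : R, w = a • f := by
  have h0 := congrFun h 0
  have h1 := congrFun h 1
  have h2 := congrFun h 2
  simp only [cross_apply, Fin.isValue, Matrix.cons_val, Pi.zero_apply] at h0 h1 h2
  obtain ⟨a, ha⟩ : f 0 ∣ w 0 := hcop.dvd_of_dvd_mul_right ⟨w 2, by linear_combination -h1⟩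
  refine ⟨a, funext fun i => ?_⟩
  refine mul_left_cancel₀ hf ?_
  simp only [Pi.smul_apply, smul_eq_mul]
  fin_cases i <;> simp only [Fin.reduceFinMk, Fin.isValue]
  · rw [ha]; ring
  · linear_combination -h2 + f 1 * ha
  · linear_combination h1 + f 2 * ha

theorem eq_zero_and_eq_zero_of_smul_add_smul_eq_zero (h : t₁ ⨯₃ t₂ ≠ 0) {a b : R}
    (hab : a • t₁ + b • t₂ = 0) : a = 0 ∧ b = 0 := by
  have ha : a • (t₁ ⨯₃ t₂) = 0 := by
    simpa [cross_self] using congrArg (· ⨯₃ t₂) hab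
  have hb : b • (t₁ ⨯₃ t₂) = 0 := by
    simpa [cross_self] using congrArg (t₁ ⨯₃ ·) hab
  exact ⟨(smul_eq_zero.mp ha).resolve_right h, (smul_eq_zero.mp hb).resolve_right h⟩

theorem exists_smul_eq_smul_add_smul [DecompositionMonoid R] (hf : f 0 ≠ 0)
    (hcop : IsRelPrime (f 0) (f 2)) (h₁ : t₁ ⬝ᵥ f = 0) (h₂ : t₂ ⬝ᵥ f = 0) {u : R} (hu : u ≠ 0)
    (hcross : t₁ ⨯₃ t₂ = u • f) (ht : t ⬝ᵥ f = 0) : ∃ a b : R, u • t = a • t₁ + b • t₂ := by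
  obtain ⟨a, ha⟩ := exists_eq_smul_of_cross_eq_zero hf hcop
    (cross_cross_eq_zero_of_dotProduct_eq_zero ht h₂)
  obtain ⟨b, hb⟩ := exists_eq_smul_of_cross_eq_zero hf hcop
    (cross_cross_eq_zero_of_dotProduct_eq_zero h₁ ht)
  refine ⟨a, b, sub_eq_zero.mp (eq_zero_of_cross_eq_zero_of_cross_eq_zero (t₁ := t₁) (t₂ := t₂)
    ?_ ?_ ?_)⟩
  · rw [← cross_anticomm, neg_eq_zero]
    simp [hcross, hb, cross_self, smul_smul, mul_comm]
  · simp [hcross, ha, cross_self, smul_smul, mul_comm]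
  · rw [hcross]
    exact smul_ne_zero hu fun h0 => hf (congrFun h0 0)

theorem free_ker_and_rank_ker_eq_two [DecompositionMonoid R] (ψ : (Fin 3 → R) →ₗ[R] R)
    (hψ : ∀ t, ψ t = t ⬝ᵥ f) (hf : f 0 ≠ 0) (hcop : IsRelPrime (f 0) (f 2))
    (h₁ : t₁ ⬝ᵥ f = 0) (h₂ : t₂ ⬝ᵥ f = 0) {u : R} (hu : IsUnit u) (hcross : t₁ ⨯₃ t₂ = u • f) :
    Module.Free R (LinearMap.ker ψ) ∧ Module.rank R (LinearMap.ker ψ) = 2 := by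
  let v : Fin 2 → LinearMap.ker ψ :=
    ![⟨t₁, by rw [LinearMap.mem_ker, hψ, h₁]⟩, ⟨t₂, by rw [LinearMap.mem_ker, hψ, h₂]⟩]
  have hne : t₁ ⨯₃ t₂ ≠ 0 := by
    rw [hcross]
    exact smul_ne_zero hu.ne_zero fun h0 => hf (congrFun h0 0)
  have hli : LinearIndependent R v := by
    refine LinearIndependent.pair_iff.mpr fun a b hab => ?_
    exact eq_zero_and_eq_zero_of_smul_add_smul_eq_zero hne (congrArg Subtype.val hab)
  have hspan : ⊤ ≤ Submodule.span R (Set.range v) := by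
    rintro ⟨t, ht⟩ -
    rw [LinearMap.mem_ker, hψ] at ht
    obtain ⟨a, b, hab⟩ := exists_smul_eq_smul_add_smul hf hcop h₁ h₂ hu.ne_zero hcross ht
    obtain ⟨u, rfl⟩ := hu
    rw [Matrix.range_cons_cons_empty, Submodule.mem_span_pair]
    refine ⟨↑u⁻¹ * a, ↑u⁻¹ * b, Subtype.ext ?_⟩
    simp only [Submodule.coe_add, Submodule.coe_smul, mul_smul, ← smul_add, ← hab]
    rw [smul_smul, Units.inv_mul, one_smul]
  let basis := Module.Basis.mk hli hspan
  exact ⟨Module.Free.of_basis basis, by simp [rank_eq_card_basis basis]⟩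

end CrossProduct

theorem Nat.choose_mul_choose_sub_comm (N a b : ℕ) :
    N.choose a * (N - a).choose b = N.choose b * (N - b).choose a := by
  have ha := Nat.choose_mul (n := N) (Nat.le_add_right a b)
  have hb := Nat.choose_mul (n := N) (Nat.le_add_left b a)
  rw [Nat.add_sub_cancel_left] at ha
  rw [Nat.add_sub_cancel] at hb
  rw [← ha, ← hb, Nat.choose_symm_add]

theorem alternating_sum_range_choose_mul_choose_eq_zero {R : Type*} [CommRing R]
    {M K q : ℕ} (hMK : M ≤ K) (hqM : q < M) :
    ∑ u ∈ range (M + 1), ((-1) ^ u * M.choose u * (K - u).choose q : R) = 0 := by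
  have key : ∑ u ∈ range (M + 1),
      Polynomial.C ((-1) ^ u * M.choose u : R) * (1 + Polynomial.X) ^ (K - u) =
      Polynomial.X ^ M * (1 + Polynomial.X) ^ (K - M) := by
    rw [show (Polynomial.X : Polynomial R) ^ M = (-1 + (1 + Polynomial.X)) ^ M by ring, add_pow,
      sum_mul]
    refine sum_congr rfl fun u hu => ?_
    rw [show K - u = M - u + (K - M) by have := mem_range.mp hu; omega, pow_add]
    simp only [map_mul, map_pow, map_neg, map_one, map_natCast]
    ring
  have := congrArg (Polynomial.coeff · q) key
  simpa only [Polynomial.finsetSum_coeff, Polynomial.coeff_C_mul, Polynomial.coeff_one_add_X_pow,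
    Polynomial.coeff_X_pow_mul', if_neg hqM.not_ge] using this

section BinaryForm

variable {R : Type*} [CommRing R]

/-- The homogenization in degree `e` of `∑ j < k, c j * t ^ j` (for `k ≤ e + 1`). -/
noncomputable def binaryForm (c : ℕ → R) (k e : ℕ) : MvPolynomial (Fin 2) R :=
  ∑ j ∈ range k, C (c j) * X 0 ^ j * X 1 ^ (e - j)

theorem binaryForm_add (c : ℕ → R) (k l e : ℕ) :
    binaryForm c (k + l) e =
      binaryForm c k e + X 0 ^ k * binaryForm (fun j => c (k + j)) l (e - k) := by
  rw [binaryForm, sum_range_add, binaryForm, binaryForm, mul_sum]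
  congr 1
  refine sum_congr rfl fun j _ => ?_
  rw [pow_add, Nat.sub_sub]
  ring

theorem binaryForm_mul_X_one_pow (c : ℕ → R) {k e : ℕ} (hk : k ≤ e + 1) (m : ℕ) :
    binaryForm c k e * X 1 ^ m = binaryForm c k (e + m) := by
  rw [binaryForm, binaryForm, sum_mul]
  refine sum_congr rfl fun j hj => ?_
  rw [show e + m - j = e - j + m by have := mem_range.mp hj; omega, pow_add]
  ring

theorem binaryForm_eq_zero {c : ℕ → R} {k : ℕ} (hc : ∀ j < k, c j = 0) (e : ℕ) :
    binaryForm c k e = 0 :=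
  sum_eq_zero fun j hj => by rw [hc j (mem_range.mp hj), C_0, zero_mul, zero_mul]

theorem binaryForm_congr_of_le {c : ℕ → R} {k l : ℕ} (hkl : k ≤ l)
    (hc : ∀ j, k ≤ j → j < l → c j = 0) (e : ℕ) :
    binaryForm c k e = binaryForm c l e := by
  rw [← Nat.add_sub_cancel' hkl, binaryForm_add,
    binaryForm_eq_zero (c := fun j => c (k + j)) (fun j hj => hc _ (by omega) (by omega)),
    mul_zero, add_zero]

theorem add_pow_eq_binaryForm (m : ℕ) :
    (X 0 + X 1 : MvPolynomial (Fin 2) R) ^ m =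
      binaryForm (fun i => (m.choose i : R)) (m + 1) m := by
  rw [add_pow, binaryForm]
  refine sum_congr rfl fun i _ => ?_
  rw [← map_natCast (C : R →+* MvPolynomial (Fin 2) R)]
  ring

theorem isHomogeneous_binaryForm (c : ℕ → R) {k e : ℕ} (hk : k ≤ e + 1) :
    (binaryForm c k e).IsHomogeneous e :=
  IsHomogeneous.sum _ _ _ fun j hj => by
    simpa [show j + (e - j) = e by have := mem_range.mp hj; omega] using
      (((isHomogeneous_X_pow 0 j).C_mul (c j)).mul (isHomogeneous_X_pow 1 (e - j)))

theorem eval_binaryForm_one_zero (c : ℕ → R) {k e : ℕ} (hk : k ≤ e) :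
    eval ![1, 0] (binaryForm c k e) = 0 := by
  rw [binaryForm, map_sum]
  exact sum_eq_zero fun j hj => by
    simp [zero_pow (Nat.sub_ne_zero_of_lt (mem_range.mp hj |>.trans_le hk))]

end BinaryForm

section Pade

variable {R : Type*} [CommRing R]

noncomputable def powerTriple (n : ℕ) : Fin 3 → MvPolynomial (Fin 2) R :=
  ![X 0 ^ n, (X 0 + X 1) ^ n, X 1 ^ n]

/-- The Padé denominator of `(1 + t) ^ (p + q + 1)` is
`B(t) = ∑ u ≤ q, padeWeight p q u * (1 + t) ^ (q - u)`, and `padeCoeff p q i` is the coefficient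
of `t ^ i` in `B(t) * (1 + t) ^ (p + q + 1)`. -/
noncomputable def padeWeight (p q u : ℕ) : R :=
  (-1) ^ u * (2 * q - u).choose q * (p + 2 * q + 1).choose u

noncomputable def padeCoeff (p q i : ℕ) : R :=
  ∑ u ∈ range (q + 1), padeWeight p q u * (p + 2 * q + 1 - u).choose i

theorem padeCoeff_eq_zero {p q i : ℕ} (hpi : p < i) (hiq : i ≤ p + q) :
    padeCoeff p q i = (0 : R) := by
  set N := p + 2 * q + 1
  have htri : ∀ u, padeWeight p q u * ((N - u).choose i : R) =
      N.choose i * ((-1) ^ u * (N - i).choose u * (2 * q - u).choose q) := by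
    intro u
    have := congrArg (Nat.cast (R := R)) (Nat.choose_mul_choose_sub_comm N u i)
    push_cast at this
    rw [padeWeight, mul_assoc, this]
    ring
  have hext : ∑ u ∈ range (q + 1), ((-1) ^ u * (N - i).choose u * (2 * q - u).choose q : R) =
      ∑ u ∈ range (N - i + 1), ((-1) ^ u * (N - i).choose u * (2 * q - u).choose q : R) := by
    refine sum_subset (range_subset_range.mpr (by omega)) fun u _ hu => ?_
    rw [Nat.choose_eq_zero_of_lt (n := 2 * q - u) (k := q) (by simp at hu; omega), Nat.cast_zero,
      mul_zero]
  rw [padeCoeff, sum_congr rfl fun u _ => htri u, ← mul_sum, hext,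
    alternating_sum_range_choose_mul_choose_eq_zero (by omega) (by omega), mul_zero]

noncomputable def padeA (p q e : ℕ) : MvPolynomial (Fin 2) R :=
  binaryForm (fun j => padeCoeff p q (p + q + 1 + j)) (q + 1) e

noncomputable def padeB (p q e : ℕ) : MvPolynomial (Fin 2) R :=
  ∑ u ∈ range (q + 1), C (padeWeight p q u) * (X 0 + X 1) ^ (q - u) * X 1 ^ (e - q + u)

noncomputable def padeC (p q e : ℕ) : MvPolynomial (Fin 2) R :=
  binaryForm (padeCoeff p q) (p + 1) e

noncomputable def padeSyzygy (p q e : ℕ) : Fin 3 → MvPolynomial (Fin 2) R :=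
  ![padeA p q e, -padeB p q e, padeC p q e]

theorem padeB_mul_add_pow (p q : ℕ) {e : ℕ} (hq : q ≤ e) :
    (padeB p q e : MvPolynomial (Fin 2) R) * (X 0 + X 1) ^ (p + q + 1) =
      binaryForm (padeCoeff p q) (p + 2 * q + 2) (p + q + 1 + e) := by
  rw [padeB, sum_mul]
  trans ∑ u ∈ range (q + 1),
    binaryForm (fun i => padeWeight p q u * ((p + 2 * q + 1 - u).choose i : R))
      (p + 2 * q + 2) (p + q + 1 + e)
  · refine sum_congr rfl fun u hu => ?_
    have hu := mem_range.mp hu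
    have hchoose : ∀ j, p + 2 * q + 1 - u + 1 ≤ j → ((p + 2 * q + 1 - u).choose j : R) = 0 :=
      fun j hj => by rw [Nat.choose_eq_zero_of_lt (by omega), Nat.cast_zero]
    have hpow : (X 0 + X 1 : MvPolynomial (Fin 2) R) ^ (p + 2 * q + 1 - u) =
        (X 0 + X 1) ^ (q - u) * (X 0 + X 1) ^ (p + q + 1) := by
      rw [← pow_add]; congr 1; omega
    trans C (padeWeight p q u) * ((X 0 + X 1) ^ (p + 2 * q + 1 - u) * X 1 ^ (e - q + u))
    · rw [hpow]; ring
    rw [add_pow_eq_binaryForm, binaryForm_mul_X_one_pow _ le_rfl,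
      binaryForm_congr_of_le (l := p + 2 * q + 2) (by omega) (fun j hj _ => hchoose j hj),
      show p + 2 * q + 1 - u + (e - q + u) = p + q + 1 + e by omega, binaryForm, binaryForm,
      mul_sum]
    refine sum_congr rfl fun i _ => ?_
    rw [map_mul]
    ring
  · simp only [binaryForm]
    rw [sum_comm]
    refine sum_congr rfl fun i _ => ?_
    rw [padeCoeff, map_sum, sum_mul, sum_mul]

theorem binaryForm_padeCoeff (p q : ℕ) {e : ℕ} (hp : p ≤ e) :
    binaryForm (padeCoeff p q) (p + 2 * q + 2) (p + q + 1 + e) =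
      (padeC p q e : MvPolynomial (Fin 2) R) * X 1 ^ (p + q + 1) +
        X 0 ^ (p + q + 1) * padeA p q e := by
  rw [show p + 2 * q + 2 = p + 1 + q + (q + 1) by ring, binaryForm_add, binaryForm_add,
    binaryForm_eq_zero (c := fun j => padeCoeff p q (p + 1 + j))
      (fun j hj => padeCoeff_eq_zero (by omega) (by omega)),
    mul_zero, add_zero, padeC, binaryForm_mul_X_one_pow _ (by omega), padeA,
    show p + 1 + q = p + q + 1 by ring, show p + q + 1 + e - (p + q + 1) = e by omega, add_comm e]

theorem padeSyzygy_dotProduct_powerTriple (p q : ℕ) {e : ℕ} (hp : p ≤ e) (hq : q ≤ e) :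
    padeSyzygy p q e ⬝ᵥ powerTriple (R := R) (p + q + 1) = 0 := by
  simp only [dotProduct, Fin.sum_univ_three, padeSyzygy, powerTriple, Matrix.cons_val]
  linear_combination
    (binaryForm_padeCoeff (R := R) p q hp).symm.trans (padeB_mul_add_pow p q hq).symm

theorem isHomogeneous_padeB (p q : ℕ) {e : ℕ} (hq : q ≤ e) :
    (padeB p q e : MvPolynomial (Fin 2) R).IsHomogeneous e :=
  IsHomogeneous.sum _ _ _ fun u hu => by
    have hsum := ((((isHomogeneous_X R (0 : Fin 2)).add (isHomogeneous_X R 1)).pow (q - u)).C_mul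
      (padeWeight p q u)).mul (isHomogeneous_X_pow 1 (e - q + u))
    rwa [one_mul, show q - u + (e - q + u) = e by have := mem_range.mp hu; omega] at hsum

theorem isHomogeneous_padeSyzygy (p q : ℕ) {e : ℕ} (hp : p ≤ e) (hq : q ≤ e) (i : Fin 3) :
    (padeSyzygy p q e i : MvPolynomial (Fin 2) R).IsHomogeneous e := by
  fin_cases i
  · exact isHomogeneous_binaryForm _ (by omega)
  · exact (isHomogeneous_padeB p q hq).neg
  · exact isHomogeneous_binaryForm _ (by omega)

theorem eval_padeB_self (p q : ℕ) :
    eval ![1, 0] (padeB p q q : MvPolynomial (Fin 2) R) = padeWeight p q 0 := by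
  rw [padeB, map_sum, sum_eq_single 0]
  · simp
  · intro u _ hu
    simp [zero_pow hu]
  · simp

theorem eval_padeB_neg_one_one (p q e : ℕ) :
    eval ![-1, 1] (padeB p q e : MvPolynomial (Fin 2) R) = padeWeight p q q := by
  rw [padeB, map_sum, sum_eq_single q]
  · simp
  · intro u hu hne
    have hlt : u < q := lt_of_le_of_ne (Nat.lt_succ_iff.mp (mem_range.mp hu)) hne
    simp [zero_pow (Nat.sub_ne_zero_of_lt hlt)]
  · simp

theorem padeWeight_ne_zero [IsDomain R] [CharZero R] {p q u : ℕ} (hu : u ≤ q) :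
    (padeWeight p q u : R) ≠ 0 := by
  rw [padeWeight]
  refine mul_ne_zero (mul_ne_zero (pow_ne_zero _ (neg_ne_zero.mpr one_ne_zero)) ?_) ?_ <;>
    exact Nat.cast_ne_zero.mpr (Nat.choose_pos (by omega)).ne'

end Pade

section Swap

variable {R : Type*} [CommRing R]

/-- The substitution `(x, y) ↦ (-x, x + y)`: it fixes `x ^ n` up to sign and swaps `(x + y) ^ n`
and `y ^ n`. -/
noncomputable def swapSubst : MvPolynomial (Fin 2) R →ₐ[R] MvPolynomial (Fin 2) R :=
  aeval ![-X 0, X 0 + X 1]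

noncomputable def swapSyzygy (n : ℕ) (t : Fin 3 → MvPolynomial (Fin 2) R) :
    Fin 3 → MvPolynomial (Fin 2) R :=
  ![(-1) ^ n * swapSubst (t 0), swapSubst (t 2), swapSubst (t 1)]

theorem swapSyzygy_dotProduct_powerTriple {n : ℕ} {t : Fin 3 → MvPolynomial (Fin 2) R}
    (h : t ⬝ᵥ powerTriple n = 0) : swapSyzygy n t ⬝ᵥ powerTriple n = 0 := by
  have := congrArg swapSubst h
  simp only [dotProduct, Fin.sum_univ_three, powerTriple, Matrix.cons_val, map_add, map_mul,
    map_pow, map_zero, swapSubst, aeval_X] at this ⊢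
  simp only [swapSyzygy, swapSubst, Matrix.cons_val]
  linear_combination this

theorem isHomogeneous_swapSubst {e : ℕ} {p : MvPolynomial (Fin 2) R} (hp : p.IsHomogeneous e) :
    (swapSubst p).IsHomogeneous e := by
  have hg : ∀ i, (![-X 0, X 0 + X 1] i : MvPolynomial (Fin 2) R).IsHomogeneous 1 := by
    intro i
    fin_cases i
    · exact (isHomogeneous_X R 0).neg
    · exact (isHomogeneous_X R 0).add (isHomogeneous_X R 1)
  simpa only [swapSubst, one_mul] using hp.aeval _ hg

theorem isHomogeneous_swapSyzygy {n e : ℕ} {t : Fin 3 → MvPolynomial (Fin 2) R}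
    (h : ∀ i, (t i).IsHomogeneous e) (i : Fin 3) : (swapSyzygy n t i).IsHomogeneous e := by
  fin_cases i
  · have hsign : ((-1) ^ n : MvPolynomial (Fin 2) R) = C ((-1) ^ n) := by simp
    show ((-1) ^ n * swapSubst (t 0)).IsHomogeneous e
    simpa only [hsign, zero_add] using
      (isHomogeneous_C _ ((-1) ^ n)).mul (isHomogeneous_swapSubst (h 0))
  · exact isHomogeneous_swapSubst (h 2)
  · exact isHomogeneous_swapSubst (h 1)

theorem eval_swapSubst (p : MvPolynomial (Fin 2) R) :
    eval ![1, 0] (swapSubst p) = eval ![-1, 1] p := by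
  rw [swapSubst, map_aeval, eval]
  congr 2
  · ext; simp
  · ext i
    fin_cases i <;> simp

end Swap

section PowerTriple

variable {K : Type*} [Field K]

theorem isRelPrime_X_zero_pow_X_one_pow (m n : ℕ) :
    IsRelPrime (X 0 ^ m : MvPolynomial (Fin 2) K) (X 1 ^ n) := by
  refine IsRelPrime.pow (X_prime.irreducible.isRelPrime_iff_not_dvd.mpr fun ⟨c, hc⟩ => ?_)
  simpa using congrArg (eval ![0, 1]) hc

theorem exists_isUnit_cross_eq_smul_powerTriple {n e₁ e₂ : ℕ}
    {t₁ t₂ : Fin 3 → MvPolynomial (Fin 2) K}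
    (h₁ : t₁ ⬝ᵥ powerTriple n = 0) (h₂ : t₂ ⬝ᵥ powerTriple n = 0)
    (hom₁ : ∀ i, (t₁ i).IsHomogeneous e₁) (hom₂ : ∀ i, (t₂ i).IsHomogeneous e₂) (he : e₁ + e₂ = n)
    (heval : eval ![1, 0] ((t₁ ⨯₃ t₂) 0) ≠ 0) :
    ∃ u : MvPolynomial (Fin 2) K, IsUnit u ∧ t₁ ⨯₃ t₂ = u • powerTriple n := by
  obtain ⟨u, hu⟩ := exists_eq_smul_of_cross_eq_zero (pow_ne_zero n (X_ne_zero 0))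
    (isRelPrime_X_zero_pow_X_one_pow n n) (cross_cross_eq_zero_of_dotProduct_eq_zero h₁ h₂)
  have hu₀ : (t₁ ⨯₃ t₂) 0 = u * X 0 ^ n := by rw [hu]; rfl
  have hhom : (u * X 0 ^ n).IsHomogeneous n := by
    rw [← hu₀, cross_apply, ← he]
    exact ((hom₁ 1).mul (hom₂ 2)).sub ((hom₁ 2).mul (hom₂ 1))
  have hu_ne : u ≠ 0 := by
    rintro rfl
    simp [hu₀] at heval
  have hdeg : u.totalDegree = 0 := by
    have := hhom.totalDegree_le
    rw [totalDegree_mul_of_isDomain hu_ne (pow_ne_zero n (X_ne_zero 0)), totalDegree_X_pow] at this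
    omega
  rw [totalDegree_eq_zero_iff_eq_C] at hdeg
  refine ⟨u, ?_, hu⟩
  rw [hdeg] at hu_ne ⊢
  exact (isUnit_iff_ne_zero.mpr fun h0 => hu_ne (by rw [h0, C_0])).map C

theorem free_ker_and_rank_ker_eq_two_of_powerTriple [CharZero K] {n : ℕ} (hn : 2 ≤ n)
    (ψ : (Fin 3 → MvPolynomial (Fin 2) K) →ₗ[MvPolynomial (Fin 2) K] MvPolynomial (Fin 2) K)
    (hψ : ∀ t, ψ t = t ⬝ᵥ powerTriple n) :
    Module.Free (MvPolynomial (Fin 2) K) (LinearMap.ker ψ) ∧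
      Module.rank (MvPolynomial (Fin 2) K) (LinearMap.ker ψ) = 2 := by
  -- degrees `⌊n/2⌋` and `⌈n/2⌉`; at `(1, 0)` only the leading terms of the two `padeB` survive
  set p₁ := n / 2
  set q₁ := n - 1 - n / 2
  set p₂ := n / 2 - 1
  set q₂ := n - n / 2
  have hn₁ : p₁ + q₁ + 1 = n := by omega
  have hn₂ : p₂ + q₂ + 1 = n := by omega
  set t₁ := swapSyzygy n (padeSyzygy (R := K) p₁ q₁ p₁)
  set t₂ := padeSyzygy (R := K) p₂ q₂ q₂
  have h₁ : t₁ ⬝ᵥ powerTriple n = 0 := swapSyzygy_dotProduct_powerTriple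
    (hn₁ ▸ padeSyzygy_dotProduct_powerTriple p₁ q₁ le_rfl (by omega))
  have h₂ : t₂ ⬝ᵥ powerTriple n = 0 :=
    hn₂ ▸ padeSyzygy_dotProduct_powerTriple p₂ q₂ (by omega) le_rfl
  have hC₂ : eval ![1, 0] (padeC (R := K) p₂ q₂ q₂) = 0 :=
    eval_binaryForm_one_zero _ (by omega)
  have heval : eval ![1, 0] ((t₁ ⨯₃ t₂) 0) = -(padeWeight p₁ q₁ q₁ * padeWeight p₂ q₂ 0) := by
    simp [cross_apply, t₁, t₂, swapSyzygy, padeSyzygy, eval_swapSubst, eval_padeB_neg_one_one,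
      eval_padeB_self, hC₂]
  have heval_ne : eval ![1, 0] ((t₁ ⨯₃ t₂) 0) ≠ 0 := by
    rw [heval, neg_ne_zero]
    exact mul_ne_zero (padeWeight_ne_zero le_rfl) (padeWeight_ne_zero (Nat.zero_le _))
  obtain ⟨u, hu, hcross⟩ := exists_isUnit_cross_eq_smul_powerTriple h₁ h₂
    (isHomogeneous_swapSyzygy (isHomogeneous_padeSyzygy p₁ q₁ le_rfl (by omega)))
    (isHomogeneous_padeSyzygy p₂ q₂ (by omega) le_rfl) (show p₁ + q₂ = n by omega) heval_ne
  exact free_ker_and_rank_ker_eq_two ψ hψ (pow_ne_zero n (X_ne_zero 0))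
    (isRelPrime_X_zero_pow_X_one_pow n n) h₁ h₂ hu hcross

end PowerTriple

/-- For `r ≥ 1`, the kernel of the `ℝ[x,y]`-module homomorphism
`φ : ℝ[x,y]³ → ℝ[x,y]` sending the standard basis vectors to `x^(r+1)`,
`(x+y)^(r+1)`, `y^(r+1)` (i.e. the first-syzygy module of the ideal
`⟨x^(r+1), (x+y)^(r+1), y^(r+1)⟩`) is a free `ℝ[x,y]`-module of rank `2`. -/
theorem syzygy_module_free_rank_two (r : ℕ) (hr : 1 ≤ r) :
    Module.Free (MvPolynomial (Fin 2) ℝ) ↥(LinearMap.ker (phi r)) ∧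
      Module.rank (MvPolynomial (Fin 2) ℝ) ↥(LinearMap.ker (phi r)) = 2 :=
  free_ker_and_rank_ker_eq_two_of_powerTriple (n := r + 1) (by omega) (phi r) fun t => by
    simp [phi, dotProduct, Fin.sum_univ_three, powerTriple]
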